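/- arXiv:2301.04512 — 6 statements merged into one kernel-verified Lean document; each statement's English description precedes it below -/
import Mathlib

section
/- Let U₁, U₂ be independent standard normal random variables, let λ ∈ [0,1], B ≥ 0, α ∈ (0,1), and z = Φ⁻¹(1 − α/2). Set V = U₂ − U₁. Then the conservative plausibility region covers U₂ with probability at least 1 − α: P( ∃ v ∈ [V − B, V + B] such that |U₂ − (λ/2)v| ≤ z·√(1 − λ + λ²/2) ) ≥ 1 − α. -/
open MeasureTheory ProbabilityTheory Set
open scoped ENNReal

noncomputable section
namespace Stmt4Aux

/-- An x-shear preserves Lebesgue measure on `ℝ × ℝ`. -/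
lemma map_shearX (c : ℝ) :
    Measure.map (fun p : ℝ × ℝ => (p.1 + c * p.2, p.2)) (volume : Measure (ℝ × ℝ)) = volume := by
  have hm : Measurable (fun p : ℝ × ℝ => (p.1 + c * p.2, p.2)) :=
    (measurable_fst.add (measurable_const.mul measurable_snd)).prodMk measurable_snd
  ext s hs
  rw [Measure.map_apply hm hs, Measure.volume_eq_prod,
    Measure.prod_apply_symm (hm hs), Measure.prod_apply_symm hs]
  congr 1
  ext y
  have : (fun x => (x, y)) ⁻¹' ((fun p : ℝ × ℝ => (p.1 + c * p.2, p.2)) ⁻¹' s)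
      = (fun x => x + c * y) ⁻¹' ((fun x => (x, y)) ⁻¹' s) := rfl
  rw [this, measure_preimage_add_right]

/-- A y-shear preserves Lebesgue measure on `ℝ × ℝ`. -/
lemma map_shearY (c : ℝ) :
    Measure.map (fun p : ℝ × ℝ => (p.1, p.2 + c * p.1)) (volume : Measure (ℝ × ℝ)) = volume := by
  have hm : Measurable (fun p : ℝ × ℝ => (p.1, p.2 + c * p.1)) :=
    measurable_fst.prodMk (measurable_snd.add (measurable_const.mul measurable_fst))
  ext s hs
  rw [Measure.map_apply hm hs, Measure.volume_eq_prod,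
    Measure.prod_apply (hm hs), Measure.prod_apply hs]
  congr 1
  ext x
  have : Prod.mk x ⁻¹' ((fun p : ℝ × ℝ => (p.1, p.2 + c * p.1)) ⁻¹' s)
      = (fun y => y + c * x) ⁻¹' (Prod.mk x ⁻¹' s) := rfl
  rw [this, measure_preimage_add_right]

lemma measurable_rot (e f : ℝ) :
    Measurable (fun p : ℝ × ℝ => (e * p.1 + f * p.2, -f * p.1 + e * p.2)) :=
  ((measurable_const.mul measurable_fst).add (measurable_const.mul measurable_snd)).prodMk
    ((measurable_const.mul measurable_fst).add (measurable_const.mul measurable_snd))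

/-- A rotation with `sin θ ≠ 0` preserves Lebesgue measure (via shear decomposition). -/
lemma map_rot_ne (e f : ℝ) (h : e ^ 2 + f ^ 2 = 1) (hf : f ≠ 0) :
    Measure.map (fun p : ℝ × ℝ => (e * p.1 + f * p.2, -f * p.1 + e * p.2))
      (volume : Measure (ℝ × ℝ)) = volume := by
  set t := (1 - e) / f with ht
  have hfun : (fun p : ℝ × ℝ => (e * p.1 + f * p.2, -f * p.1 + e * p.2))
      = (fun p : ℝ × ℝ => (p.1 + t * p.2, p.2)) ∘ (fun p : ℝ × ℝ => (p.1, p.2 + (-f) * p.1))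
        ∘ (fun p : ℝ × ℝ => (p.1 + t * p.2, p.2)) := by
    funext p
    obtain ⟨x, y⟩ := p
    simp only [Function.comp_apply, Prod.mk.injEq, ht]
    constructor
    · field_simp
      linear_combination y * h
    · field_simp
      ring
  rw [hfun, ← Function.comp_assoc]
  have hmX : Measurable (fun p : ℝ × ℝ => (p.1 + t * p.2, p.2)) :=
    (measurable_fst.add (measurable_const.mul measurable_snd)).prodMk measurable_snd
  have hmY : Measurable (fun p : ℝ × ℝ => (p.1, p.2 + (-f) * p.1)) :=
    measurable_fst.prodMk (measurable_snd.add (measurable_const.mul measurable_fst))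
  rw [← Measure.map_map (hmX.comp hmY) hmX, ← Measure.map_map hmX hmY,
    map_shearX t, map_shearY (-f), map_shearX t]

/-- Any rotation preserves Lebesgue measure on `ℝ × ℝ`. -/
lemma map_rot (e f : ℝ) (h : e ^ 2 + f ^ 2 = 1) :
    Measure.map (fun p : ℝ × ℝ => (e * p.1 + f * p.2, -f * p.1 + e * p.2))
      (volume : Measure (ℝ × ℝ)) = volume := by
  rcases eq_or_ne f 0 with hf | hf
  · subst hf
    have he : (e - 1) * (e + 1) = 0 := by nlinarith
    rcases mul_eq_zero.mp he with h' | h'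
    · have he1 : e = 1 := by linarith
      subst he1
      have : (fun p : ℝ × ℝ => (1 * p.1 + 0 * p.2, -0 * p.1 + 1 * p.2)) = id := by
        funext p; simp
      rw [this, Measure.map_id]
    · have he1 : e = -1 := by linarith
      subst he1
      have h01 : (0:ℝ) ^ 2 + 1 ^ 2 = 1 := by norm_num
      have hfun : (fun p : ℝ × ℝ => (-1 * p.1 + 0 * p.2, -0 * p.1 + -1 * p.2))
          = (fun p : ℝ × ℝ => (0 * p.1 + 1 * p.2, -1 * p.1 + 0 * p.2))
            ∘ (fun p : ℝ × ℝ => (0 * p.1 + 1 * p.2, -1 * p.1 + 0 * p.2)) := by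
        funext p; simp [Function.comp]
      rw [hfun, ← Measure.map_map (measurable_rot 0 1) (measurable_rot 0 1),
        map_rot_ne 0 1 h01 one_ne_zero, map_rot_ne 0 1 h01 one_ne_zero]
  · exact map_rot_ne e f h hf

/-- The joint law of two independent standard gaussians as a density w.r.t. Lebesgue. -/
lemma prod_gaussian_eq_withDensity :
    (gaussianReal 0 1).prod (gaussianReal 0 1)
      = (volume : Measure (ℝ × ℝ)).withDensity
          (fun p => gaussianPDF 0 1 p.1 * gaussianPDF 0 1 p.2) := by
  rw [Measure.volume_eq_prod]
  refine Measure.prod_eq fun s t hs ht => ?_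
  rw [withDensity_apply _ (hs.prod ht), ← Measure.prod_restrict,
    lintegral_prod_mul (measurable_gaussianPDF 0 1).aemeasurable
      (measurable_gaussianPDF 0 1).aemeasurable,
    gaussianReal_of_var_ne_zero 0 one_ne_zero, withDensity_apply _ hs, withDensity_apply _ ht]

/-- The 2D standard gaussian density is rotation invariant. -/
lemma pdf_rot_invariant (e f : ℝ) (h : e ^ 2 + f ^ 2 = 1) (x y : ℝ) :
    gaussianPDF 0 1 (e * x + f * y) * gaussianPDF 0 1 (-f * x + e * y)
      = gaussianPDF 0 1 x * gaussianPDF 0 1 y := by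
  have key : ∀ a b : ℝ, gaussianPDF 0 1 a * gaussianPDF 0 1 b
      = ENNReal.ofReal ((Real.sqrt (2 * Real.pi))⁻¹ ^ 2 * Real.exp (-(a ^ 2 + b ^ 2) / 2)) := by
    intro a b
    rw [gaussianPDF, gaussianPDF, ← ENNReal.ofReal_mul (gaussianPDFReal_nonneg 0 1 a)]
    congr 1
    simp only [gaussianPDFReal, NNReal.coe_one, mul_one, sub_zero]
    rw [mul_mul_mul_comm, ← Real.exp_add, ← sq]
    congr 1
    ring
  rw [key, key]
  congr 1
  congr 1
  congr 1
  linear_combination (-(x ^ 2 + y ^ 2) / 2) * h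

/-- The joint law of two independent standard gaussians is rotation invariant. -/
lemma map_rot_gaussian (e f : ℝ) (h : e ^ 2 + f ^ 2 = 1) :
    Measure.map (fun p : ℝ × ℝ => (e * p.1 + f * p.2, -f * p.1 + e * p.2))
      ((gaussianReal 0 1).prod (gaussianReal 0 1)) = (gaussianReal 0 1).prod (gaussianReal 0 1) := by
  set R := fun p : ℝ × ℝ => (e * p.1 + f * p.2, -f * p.1 + e * p.2) with hR
  have hmR : Measurable R := measurable_rot e f
  have hF : Measurable (fun p : ℝ × ℝ => gaussianPDF 0 1 p.1 * gaussianPDF 0 1 p.2) :=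
    ((measurable_gaussianPDF 0 1).comp measurable_fst).mul
      ((measurable_gaussianPDF 0 1).comp measurable_snd)
  ext s hs
  rw [Measure.map_apply hmR hs, prod_gaussian_eq_withDensity,
    withDensity_apply _ (hmR hs), withDensity_apply _ hs]
  rw [← lintegral_indicator (hmR hs), ← lintegral_indicator hs]
  conv_rhs => rw [← map_rot e f h]
  rw [lintegral_map (hF.indicator hs) hmR]
  congr 1
  funext p
  by_cases hp : R p ∈ s
  · rw [Set.indicator_of_mem hp, Set.indicator_of_mem (by exact hp)]
    exact (pdf_rot_invariant e f h p.1 p.2).symm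
  · rw [Set.indicator_of_notMem hp, Set.indicator_of_notMem (by exact hp)]

/-- Two-sided bound for the standard gaussian: `P(-z ≤ X ≤ z) ≥ 1 - α` when `Φ(z) = 1 - α/2`. -/
lemma gauss_Icc_bound (z α : ℝ) (hα : α ∈ Set.Ioo (0:ℝ) 1)
    (hz : cdf (gaussianReal 0 1) z = 1 - α / 2) :
    ENNReal.ofReal (1 - α) ≤ (gaussianReal 0 1) (Set.Icc (-z) z) := by
  set μ := gaussianReal 0 1 with hμ
  have hIic : μ (Iic z) = ENNReal.ofReal (1 - α / 2) := by
    rw [← ofReal_cdf, hz]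
  have hatom : μ {z} = 0 :=
    (gaussianReal_absolutelyContinuous 0 one_ne_zero) Real.volume_singleton
  have hIio : μ (Iio z) = ENNReal.ofReal (1 - α / 2) := by
    refine le_antisymm (hIic ▸ measure_mono Iio_subset_Iic_self) ?_
    have hss : Iic z ⊆ Iio z ∪ {z} := by
      intro x hx
      rcases lt_or_eq_of_le (mem_Iic.mp hx) with h | h
      · exact Or.inl h
      · exact Or.inr h
    calc ENNReal.ofReal (1 - α / 2) = μ (Iic z) := hIic.symm
    _ ≤ μ (Iio z ∪ {z}) := measure_mono hss
    _ ≤ μ (Iio z) + μ {z} := measure_union_le _ _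
    _ = μ (Iio z) := by rw [hatom, add_zero]
  have hmapneg : μ.map (fun x => -1 * x) = μ := by
    rw [hμ, gaussianReal_map_const_mul]
    norm_num
  have hneg : μ (Iic (-z)) = μ (Ici z) := by
    conv_lhs => rw [← hmapneg]
    rw [Measure.map_apply (measurable_const_mul _) measurableSet_Iic]
    congr 1
    ext x
    simp only [mem_preimage, mem_Iic, mem_Ici]
    constructor <;> intro h <;> linarith
  have hIci : μ (Ici z) = ENNReal.ofReal (α / 2) := by
    have hcompl : Ici z = (Iio z)ᶜ := by ext x; simp
    have key : (1 : ℝ≥0∞) - ENNReal.ofReal (1 - α / 2) = ENNReal.ofReal (α / 2) := by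
      rw [← ENNReal.ofReal_one,
        ← ENNReal.ofReal_sub _ (show (0:ℝ) ≤ 1 - α / 2 by linarith [hα.2])]
      congr 1
      ring
    rw [hcompl, measure_compl measurableSet_Iio (measure_ne_top μ _), hIio, measure_univ, key]
  have hsub : Iic z ⊆ Icc (-z) z ∪ Iic (-z) := by
    intro x hx
    rcases le_or_gt (-z) x with h | h
    · exact Or.inl ⟨h, hx⟩
    · exact Or.inr h.le
  have hle : μ (Iic z) ≤ μ (Icc (-z) z) + ENNReal.ofReal (α / 2) := by
    calc μ (Iic z) ≤ μ (Icc (-z) z ∪ Iic (-z)) := measure_mono hsub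
    _ ≤ μ (Icc (-z) z) + μ (Iic (-z)) := measure_union_le _ _
    _ = μ (Icc (-z) z) + ENNReal.ofReal (α / 2) := by rw [hneg, hIci]
  have hsum : ENNReal.ofReal (1 - α) + ENNReal.ofReal (α / 2) = ENNReal.ofReal (1 - α / 2) := by
    rw [← ENNReal.ofReal_add (by linarith [hα.2]) (by linarith [hα.1])]
    ring_nf
  rw [← ENNReal.add_le_add_iff_right (a := ENNReal.ofReal (α / 2)) ENNReal.ofReal_ne_top, hsum,
    ← hIic]
  exact hle

end Stmt4Aux

end

open Stmt4Aux

/-- For independent standard normal `U₁, U₂`, `λ ∈ [0,1]`, `B ≥ 0`,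
`α ∈ (0,1)`, `z = Φ⁻¹(1 − α/2)` and `V = U₂ − U₁`, the conservative plausibility region
covers `U₂` with probability at least `1 − α`:
`P(∃ v ∈ [V − B, V + B], |U₂ − (λ/2)v| ≤ z√(1 − λ + λ²/2)) ≥ 1 − α`. -/
theorem stmt4 {Ω : Type*} [MeasurableSpace Ω] (P : Measure Ω) [IsProbabilityMeasure P]
    (U₁ U₂ : Ω → ℝ) (hm₁ : Measurable U₁) (hm₂ : Measurable U₂)
    (h₁ : Measure.map U₁ P = gaussianReal 0 1) (h₂ : Measure.map U₂ P = gaussianReal 0 1)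
    (hind : IndepFun U₁ U₂ P) (lam : ℝ) (hlam : lam ∈ Set.Icc (0 : ℝ) 1)
    (B : ℝ) (hB : 0 ≤ B) (α : ℝ) (hα : α ∈ Set.Ioo (0 : ℝ) 1)
    (z : ℝ) (hz : cdf (gaussianReal 0 1) z = 1 - α / 2) :
    ENNReal.ofReal (1 - α) ≤
      P {ω | ∃ v ∈ Set.Icc (U₂ ω - U₁ ω - B) (U₂ ω - U₁ ω + B),
        |U₂ ω - lam / 2 * v| ≤ z * Real.sqrt (1 - lam + lam ^ 2 / 2)} := by
  have hs2 : (0 : ℝ) < 1 - lam + lam ^ 2 / 2 := by nlinarith [sq_nonneg (lam - 1)]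
  set σ : ℝ := Real.sqrt (1 - lam + lam ^ 2 / 2) with hσdef
  have hσ : 0 < σ := Real.sqrt_pos.mpr hs2
  have hσ2 : σ ^ 2 = 1 - lam + lam ^ 2 / 2 := Real.sq_sqrt hs2.le
  set e : ℝ := (1 - lam / 2) / σ with hedef
  set f : ℝ := (lam / 2) / σ with hfdef
  have hef : e ^ 2 + f ^ 2 = 1 := by
    rw [hedef, hfdef, div_pow, div_pow, ← add_div, hσ2]
    rw [div_eq_one_iff_eq (by positivity)]
    ring
  set W : Ω → ℝ := fun ω => e * U₂ ω + f * U₁ ω with hWdef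
  have hmW : Measurable W := (measurable_const.mul hm₂).add (measurable_const.mul hm₁)
  -- the law of `W` is standard gaussian, by rotation invariance
  have hpair : Measure.map (fun ω => (U₂ ω, U₁ ω)) P
      = (gaussianReal 0 1).prod (gaussianReal 0 1) := by
    rw [(indepFun_iff_map_prod_eq_prod_map_map hm₂.aemeasurable hm₁.aemeasurable).mp hind.symm,
      h₁, h₂]
  have hlaw : Measure.map W P = gaussianReal 0 1 := by
    have hcomp : W = (Prod.fst ∘ (fun p : ℝ × ℝ => (e * p.1 + f * p.2, -f * p.1 + e * p.2)))
        ∘ (fun ω => (U₂ ω, U₁ ω)) := by funext ω; rfl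
    rw [hcomp, ← Measure.map_map (measurable_fst.comp (measurable_rot e f))
        (hm₂.prodMk hm₁), hpair,
      ← Measure.map_map measurable_fst (measurable_rot e f), map_rot_gaussian e f hef,
      Measure.map_fst_prod, measure_univ, one_smul]
  -- event inclusion: taking `v = U₂ - U₁` witnesses membership
  have hsubset : W ⁻¹' (Set.Icc (-z) z) ⊆
      {ω | ∃ v ∈ Set.Icc (U₂ ω - U₁ ω - B) (U₂ ω - U₁ ω + B),
        |U₂ ω - lam / 2 * v| ≤ z * σ} := by
    intro ω hω
    refine ⟨U₂ ω - U₁ ω, ⟨by linarith, by linarith⟩, ?_⟩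
    have habs : |W ω| ≤ z := abs_le.mpr ⟨hω.1, hω.2⟩
    have hrw : U₂ ω - lam / 2 * (U₂ ω - U₁ ω) = σ * W ω := by
      rw [hWdef]
      simp only [hedef, hfdef]
      field_simp
      ring
    rw [hrw, abs_mul, abs_of_pos hσ]
    calc σ * |W ω| ≤ σ * z := mul_le_mul_of_nonneg_left habs hσ.le
    _ = z * σ := mul_comm _ _
  calc ENNReal.ofReal (1 - α) ≤ (gaussianReal 0 1) (Set.Icc (-z) z) :=
        gauss_Icc_bound z α hα hz
  _ = P (W ⁻¹' Set.Icc (-z) z) := by rw [← hlaw, Measure.map_apply hmW measurableSet_Icc]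
  _ ≤ _ := measure_mono hsubset
end

section
/- Let λ ≥ 0, B ≥ 0, r ≥ 0 and c ∈ ℝ. Then the union of intervals ⋃_{v ∈ [c−B, c+B]} [(λ/2)v − r, (λ/2)v + r] equals the closed interval [(λ/2)(c − B) − r, (λ/2)(c + B) + r], and hence its length equals λB + 2r. In particular, with r = z·√(1 − λ + λ²/2), the width of the two-point plausibility region equals λB + 2z√(1 − λ + λ²/2). -/
/-- For `λ ≥ 0`, `B ≥ 0`, `r ≥ 0` and `c ∈ ℝ`, the union
`⋃_{v ∈ [c−B, c+B]} [(λ/2)v − r, (λ/2)v + r]` equals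
`[(λ/2)(c − B) − r, (λ/2)(c + B) + r]`, whose length is `λB + 2r`. -/
theorem stmt5 (lam B r c : ℝ) (hlam : 0 ≤ lam) (hB : 0 ≤ B) (hr : 0 ≤ r) :
    (⋃ v ∈ Set.Icc (c - B) (c + B), Set.Icc (lam / 2 * v - r) (lam / 2 * v + r)) =
        Set.Icc (lam / 2 * (c - B) - r) (lam / 2 * (c + B) + r) ∧
      (lam / 2 * (c + B) + r) - (lam / 2 * (c - B) - r) = lam * B + 2 * r := by
  constructor
  · ext x
    simp only [Set.mem_iUnion, Set.mem_Icc, exists_prop]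
    constructor
    · rintro ⟨v, ⟨h1, h2⟩, h3, h4⟩
      constructor <;> nlinarith
    · rintro ⟨h1, h2⟩
      rcases eq_or_lt_of_le hlam with hl | hl
      · refine ⟨c, ⟨by linarith, by linarith⟩, ?_, ?_⟩ <;> nlinarith [hl.symm]
      · rcases le_total (2 * x / lam) (c - B) with h | h
        · have h' : 2 * x ≤ (c - B) * lam := (div_le_iff₀ hl).mp h
          exact ⟨c - B, ⟨le_refl _, by linarith⟩, by linarith, by nlinarith⟩
        · rcases le_total (2 * x / lam) (c + B) with h2' | h2'
          · have hx : lam / 2 * (2 * x / lam) = x := by field_simp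
            exact ⟨2 * x / lam, ⟨h, h2'⟩, by rw [hx]; linarith, by rw [hx]; linarith⟩
          · have h' : (c + B) * lam ≤ 2 * x := (le_div_iff₀ hl).mp h2'
            exact ⟨c + B, ⟨by linarith, le_refl _⟩, by nlinarith, by linarith⟩
  · ring
end

section
/- Let z > 0 and 0 ≤ B < z, and define f(λ) = λB + 2z·√(1 − λ + λ²/2) for λ ∈ [0,1]. Then λ̂ = 1 − B/√(2z² − B²) lies in [0,1], f(λ̂) = B + √(2z² − B²), and f(λ̂) ≤ f(λ) for every λ ∈ [0,1]; that is, λ̂ minimizes the width of the two-point plausibility interval over λ ∈ [0,1] and the minimal width equals B + √(2z² − B²). -/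
/-- For `z > 0` and `0 ≤ B < z`, with
`f(λ) = λB + 2z√(1 − λ + λ²/2)` and `λ̂ = 1 − B/√(2z² − B²)`, we have `λ̂ ∈ [0,1]`,
`f(λ̂) = B + √(2z² − B²)`, and `f(λ̂) ≤ f(λ)` for every `λ ∈ [0,1]`. -/
theorem stmt6 (z B : ℝ) (hz : 0 < z) (hB : 0 ≤ B) (hBz : B < z)
    (f : ℝ → ℝ) (hf : ∀ lam, f lam = lam * B + 2 * z * Real.sqrt (1 - lam + lam ^ 2 / 2))
    (lamhat : ℝ) (hlamhat : lamhat = 1 - B / Real.sqrt (2 * z ^ 2 - B ^ 2)) :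
    lamhat ∈ Set.Icc (0 : ℝ) 1 ∧
      f lamhat = B + Real.sqrt (2 * z ^ 2 - B ^ 2) ∧
      ∀ lam ∈ Set.Icc (0 : ℝ) 1, f lamhat ≤ f lam := by
  set s : ℝ := Real.sqrt (2 * z ^ 2 - B ^ 2) with hs
  have harg : (0:ℝ) < 2 * z ^ 2 - B ^ 2 := by nlinarith
  have hs2 : s ^ 2 = 2 * z ^ 2 - B ^ 2 := Real.sq_sqrt harg.le
  have hspos : 0 < s := Real.sqrt_pos.mpr harg
  have hBs : B ≤ s := by nlinarith
  have hmem : lamhat ∈ Set.Icc (0:ℝ) 1 := by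
    constructor
    · rw [hlamhat]
      have : B / s ≤ 1 := (div_le_one hspos).mpr hBs
      linarith
    · rw [hlamhat]
      have : 0 ≤ B / s := div_nonneg hB hspos.le
      linarith
  have hval : f lamhat = B + s := by
    rw [hf]
    have h1 : 1 - lamhat + lamhat ^ 2 / 2 = (z / s) ^ 2 := by
      rw [hlamhat]
      field_simp
      linear_combination hs2
    have h2z : 2 * z * (z / s) = s + B ^ 2 / s := by
      field_simp
      linarith [hs2]
    rw [h1, Real.sqrt_sq (by positivity : (0:ℝ) ≤ z / s), hlamhat, h2z]
    field_simp
    linarith [hs2]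
  refine ⟨hmem, hval, ?_⟩
  rintro lam ⟨h0, h1⟩
  rw [hf lam, hval]
  have hnn : (0:ℝ) ≤ (s + (1 - lam) * B) / (2 * z) :=
    div_nonneg (by nlinarith) (by positivity)
  have key : (s + (1 - lam) * B) / (2 * z) ≤ Real.sqrt (1 - lam + lam ^ 2 / 2) := by
    rw [show (s + (1 - lam) * B) / (2 * z) = Real.sqrt (((s + (1 - lam) * B) / (2 * z)) ^ 2) from
      (Real.sqrt_sq hnn).symm]
    apply Real.sqrt_le_sqrt
    rw [div_pow, div_le_iff₀ (by positivity)]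
    nlinarith [sq_nonneg ((1 - lam) * s - B), hs2]
  have h2 : 2 * z * ((s + (1 - lam) * B) / (2 * z)) ≤
      2 * z * Real.sqrt (1 - lam + lam ^ 2 / 2) := by
    exact mul_le_mul_of_nonneg_left key (by positivity)
  have h3 : 2 * z * ((s + (1 - lam) * B) / (2 * z)) = s + (1 - lam) * B := by
    field_simp
  nlinarith [h2, h3]
end

section
/- Let z > 0 and B ≥ z, and define f(λ) = λB + 2z·√(1 − λ + λ²/2) for λ ∈ [0,1]. Then f(0) = 2z and f(0) ≤ f(λ) for every λ ∈ [0,1]; that is, when B ≥ z the optimal mixing proportion is λ̂_B = 0 and the minimal width of the two-point plausibility interval equals 2z. -/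
/-!
Since `(1 - λ/2)² = 1 - λ + λ²/4`, the square root is at least `1 - λ/2`, so
`f λ ≥ λB + 2z(1 - λ/2) = 2z + λ(B - z) ≥ 2z` whenever `λ ≥ 0` and `B ≥ z`.
-/

lemma one_sub_half_le_sqrt (lam : ℝ) : 1 - lam / 2 ≤ √(1 - lam + lam ^ 2 / 2) :=
  (le_abs_self _).trans (Real.abs_le_sqrt (by nlinarith [sq_nonneg lam]))

lemma two_mul_le_width {z B lam : ℝ} (hz : 0 ≤ z) (hB : z ≤ B) (hlam : 0 ≤ lam) :
    2 * z ≤ lam * B + 2 * z * √(1 - lam + lam ^ 2 / 2) := by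
  calc 2 * z ≤ 2 * z + lam * (B - z) := le_add_of_nonneg_right (mul_nonneg hlam (sub_nonneg.2 hB))
    _ = lam * B + 2 * z * (1 - lam / 2) := by ring
    _ ≤ lam * B + 2 * z * √(1 - lam + lam ^ 2 / 2) := by gcongr; exact one_sub_half_le_sqrt lam

/-- For `z > 0` and `B ≥ z`, with `f(λ) = λB + 2z√(1 − λ + λ²/2)`,
we have `f(0) = 2z` and `f(0) ≤ f(λ)` for every `λ ∈ [0,1]`. -/
theorem stmt7 (z B : ℝ) (hz : 0 < z) (hB : z ≤ B)
    (f : ℝ → ℝ) (hf : ∀ lam, f lam = lam * B + 2 * z * Real.sqrt (1 - lam + lam ^ 2 / 2)) :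
    f 0 = 2 * z ∧ ∀ lam ∈ Set.Icc (0 : ℝ) 1, f 0 ≤ f lam := by
  have hf0 : f 0 = 2 * z := by simp [hf]
  refine ⟨hf0, fun lam hlam => ?_⟩
  rw [hf0, hf]
  exact two_mul_le_width hz.le hB hlam.1
end

section
/- Let U₁, U₂, U₃ be independent standard normal random variables, λ₁, λ₂ ≥ 0, B₂₁, B₃₂ ≥ 0, α ∈ (0,1), z = Φ⁻¹(1 − α/2), and σ = √((λ₁/2 + λ₂/3)² + (1 − λ₁/2 − (2/3)λ₂)² + (λ₂/3)²). Set V₂₁ = U₂ − U₁ and V₃₂ = U₃ − U₂. Then P( ∃ v₂₁ ∈ [V₂₁ − B₂₁, V₂₁ + B₂₁], ∃ v₃₂ ∈ [V₃₂ − B₃₂, V₃₂ + B₃₂] such that |U₂ − (λ₁/2 + λ₂/3)v₂₁ + (λ₂/3)v₃₂| ≤ z·σ ) ≥ 1 − α; that is, the conservative three-point plausibility region covers U₂ with probability at least 1 − α. -/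
open MeasureTheory ProbabilityTheory

section Stmt13Aux
open Real
open scoped ENNReal NNReal


lemma gauss_conv_pdf (v w : ℝ≥0) (hv : v ≠ 0) (hw : w ≠ 0) (u : ℝ) :
    ∫ x, gaussianPDFReal 0 v x * gaussianPDFReal 0 w (u - x) =
      gaussianPDFReal 0 (v + w) u := by
  have hV : (0:ℝ) < v := by positivity
  have hW : (0:ℝ) < w := by positivity
  set V : ℝ := (v:ℝ) with hVdef
  set W : ℝ := (w:ℝ) with hWdef
  have hVW : (0:ℝ) < V + W := by linarith
  have hV0 : V ≠ 0 := ne_of_gt hV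
  have hW0 : W ≠ 0 := ne_of_gt hW
  have hVW0 : V + W ≠ 0 := ne_of_gt hVW
  set c : ℝ := (V + W) / (2 * V * W) with hcdef
  have hc : 0 < c := by positivity
  set m : ℝ := V * u / (V + W) with hmdef
  have key : ∀ x, gaussianPDFReal 0 v x * gaussianPDFReal 0 w (u - x)
      = gaussianPDFReal 0 (v + w) u * ((√(π / c))⁻¹ * rexp (-c * (x - m) ^ 2)) := by
    intro x
    simp only [gaussianPDFReal, NNReal.coe_add, sub_zero]
    rw [show ((v:ℝ)) = V from rfl, show ((w:ℝ)) = W from rfl]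
    have hconst : (√(2 * π * V))⁻¹ * (√(2 * π * W))⁻¹
        = (√(2 * π * (V + W)))⁻¹ * (√(π / c))⁻¹ := by
      have h1 : √(2 * π * V) * √(2 * π * W) = √(2 * π * (V + W)) * √(π / c) := by
        have hpc : π / c = π * (2 * V * W) / (V + W) := by
          rw [hcdef]; field_simp
        rw [hpc, ← Real.sqrt_mul (by positivity), ← Real.sqrt_mul (by positivity)]
        congr 1
        field_simp
      rw [← mul_inv, ← mul_inv, h1]
    have hexp : rexp (-x ^ 2 / (2 * V)) * rexp (-(u - x) ^ 2 / (2 * W))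
        = rexp (-u ^ 2 / (2 * (V + W))) * rexp (-c * (x - m) ^ 2) := by
      rw [← Real.exp_add, ← Real.exp_add]
      congr 1
      rw [hcdef, hmdef]
      field_simp
      ring
    calc (√(2 * π * V))⁻¹ * rexp (-x ^ 2 / (2 * V)) *
          ((√(2 * π * W))⁻¹ * rexp (-(u - x) ^ 2 / (2 * W)))
        = ((√(2 * π * V))⁻¹ * (√(2 * π * W))⁻¹) *
          (rexp (-x ^ 2 / (2 * V)) * rexp (-(u - x) ^ 2 / (2 * W))) := by ring
      _ = ((√(2 * π * (V + W)))⁻¹ * (√(π / c))⁻¹) *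
          (rexp (-u ^ 2 / (2 * (V + W))) * rexp (-c * (x - m) ^ 2)) := by
            rw [hconst, hexp]
      _ = _ := by ring
  simp_rw [key]
  rw [integral_const_mul]
  have : ∫ x, (√(π / c))⁻¹ * rexp (-c * (x - m) ^ 2) = 1 := by
    rw [integral_const_mul]
    have h1 : ∫ x, rexp (-c * (x - m) ^ 2) = √(π / c) := by
      rw [integral_sub_right_eq_self (fun x => rexp (-c * x ^ 2)) m]
      exact integral_gaussian c
    rw [h1, inv_mul_cancel₀ (by positivity)]
  rw [this, mul_one]

lemma gauss_conv_pdf_lint (v w : ℝ≥0) (hv : v ≠ 0) (hw : w ≠ 0) (u : ℝ) :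
    ∫⁻ x, gaussianPDF 0 v x * gaussianPDF x w u = gaussianPDF 0 (v + w) u := by
  have hrw : ∀ x : ℝ, gaussianPDFReal x w u = gaussianPDFReal 0 w (u - x) := fun x => by
    rw [gaussianPDFReal_sub, zero_add]
  have hint : Integrable (fun x => gaussianPDFReal 0 v x * gaussianPDFReal 0 w (u - x)) := by
    have := (integrable_gaussianPDFReal 0 v).bdd_mul
      (f := fun x => gaussianPDFReal 0 w (u - x)) (c := (√(2 * π * (w:ℝ)))⁻¹) ?_ ?_
    · exact this.congr (ae_of_all _ fun x => mul_comm _ _)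
    · exact ((measurable_gaussianPDFReal 0 w).comp
        (measurable_const.sub measurable_id)).aestronglyMeasurable
    · refine ae_of_all _ fun x => ?_
      rw [Real.norm_eq_abs, abs_of_nonneg (gaussianPDFReal_nonneg _ _ _)]
      unfold gaussianPDFReal
      refine mul_le_of_le_one_right (by positivity) (Real.exp_le_one_iff.mpr ?_)
      apply div_nonpos_of_nonpos_of_nonneg
      · simpa using sq_nonneg _
      · positivity
  calc ∫⁻ x, gaussianPDF 0 v x * gaussianPDF x w u
      = ∫⁻ x, ENNReal.ofReal (gaussianPDFReal 0 v x * gaussianPDFReal 0 w (u - x)) := by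
        refine lintegral_congr fun x => ?_
        rw [gaussianPDF, gaussianPDF, hrw x, ← ENNReal.ofReal_mul (gaussianPDFReal_nonneg _ _ _)]
    _ = ENNReal.ofReal (∫ x, gaussianPDFReal 0 v x * gaussianPDFReal 0 w (u - x)) := by
        rw [← ofReal_integral_eq_lintegral_ofReal hint
          (ae_of_all _ fun x => mul_nonneg (gaussianPDFReal_nonneg _ _ _)
            (gaussianPDFReal_nonneg _ _ _))]
    _ = gaussianPDF 0 (v + w) u := by rw [gauss_conv_pdf v w hv hw u, gaussianPDF]

lemma gauss_conv (v w : ℝ≥0) :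
    Measure.conv (gaussianReal 0 v) (gaussianReal 0 w) = gaussianReal 0 (v + w) := by
  rcases eq_or_ne v 0 with rfl | hv
  · rw [gaussianReal_zero_var, zero_add]
    simp
  rcases eq_or_ne w 0 with rfl | hw
  · rw [gaussianReal_zero_var, add_zero]
    simp
  have hvw : v + w ≠ 0 := by simp [hv]
  have hFmeas : Measurable fun p : ℝ × ℝ => gaussianPDF p.1 w p.2 := by
    unfold gaussianPDF gaussianPDFReal
    fun_prop
  ext s hs
  rw [show Measure.conv (gaussianReal 0 v) (gaussianReal 0 w)
      = Measure.map (fun p : ℝ × ℝ => p.1 + p.2) ((gaussianReal 0 v).prod (gaussianReal 0 w))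
      from rfl,
    Measure.map_apply measurable_add hs, Measure.prod_apply (measurable_add hs)]
  have hslice : ∀ x : ℝ, (gaussianReal 0 w) (Prod.mk x ⁻¹' ((fun p : ℝ × ℝ => p.1 + p.2) ⁻¹' s))
      = ∫⁻ u in s, gaussianPDF x w u := by
    intro x
    have : Prod.mk x ⁻¹' ((fun p : ℝ × ℝ => p.1 + p.2) ⁻¹' s) = (fun y => x + y) ⁻¹' s := rfl
    rw [this, ← Measure.map_apply (measurable_const_add x) hs,
      gaussianReal_map_const_add, zero_add, gaussianReal_apply _ hw s]
  simp_rw [hslice]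
  have hmeas : Measurable fun x : ℝ => ∫⁻ u in s, gaussianPDF x w u :=
    Measurable.lintegral_prod_right hFmeas
  rw [gaussianReal_of_var_ne_zero 0 hv,
    lintegral_withDensity_eq_lintegral_mul _ (measurable_gaussianPDF 0 v) hmeas]
  simp only [Pi.mul_apply]
  have hpull : ∀ x : ℝ, gaussianPDF 0 v x * ∫⁻ u in s, gaussianPDF x w u
      = ∫⁻ u in s, gaussianPDF 0 v x * gaussianPDF x w u := fun x =>
    (lintegral_const_mul _ (hFmeas.comp (measurable_prodMk_left))).symm
  simp_rw [hpull]
  rw [lintegral_lintegral_swap]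
  · rw [gaussianReal_apply _ hvw s]
    refine setLIntegral_congr_fun hs (fun u _ => ?_)
    exact gauss_conv_pdf_lint v w hv hw u
  · refine Measurable.aemeasurable ?_
    have huncurry : (Function.uncurry fun a u => gaussianPDF 0 v a * gaussianPDF a w u)
        = fun p : ℝ × ℝ => gaussianPDF 0 v p.1 * gaussianPDF p.1 w p.2 := rfl
    rw [huncurry]
    exact ((measurable_gaussianPDF 0 v).comp measurable_fst).mul hFmeas

lemma map_add_gauss {Ω : Type*} [MeasurableSpace Ω] {P : Measure Ω} [IsProbabilityMeasure P]
    {X Y : Ω → ℝ} (hX : Measurable X) (hY : Measurable Y) (h : IndepFun X Y P)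
    {v w : ℝ≥0} (hv : Measure.map X P = gaussianReal 0 v)
    (hw : Measure.map Y P = gaussianReal 0 w) :
    Measure.map (fun ω => X ω + Y ω) P = gaussianReal 0 (v + w) := by
  have hp := (indepFun_iff_map_prod_eq_prod_map_map hX.aemeasurable hY.aemeasurable).mp h
  have hmm : Measure.map (fun ω => X ω + Y ω) P
      = Measure.map (fun p : ℝ × ℝ => p.1 + p.2) (Measure.map (fun ω => (X ω, Y ω)) P) := by
    rw [Measure.map_map measurable_add (hX.prodMk hY)]; rfl
  rw [hmm, hp, hv, hw]
  exact gauss_conv v w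

lemma gauss_map_neg : (gaussianReal 0 1).map (fun x : ℝ => -x) = gaussianReal 0 1 := by
  have h := gaussianReal_map_const_mul (μ := 0) (v := 1) (-1)
  simp only [mul_zero, neg_one_mul] at h
  rw [h]
  congr 1
  rw [← NNReal.coe_inj]
  norm_num

lemma gauss_Icc_ge {α : ℝ} (hα0 : 0 < α) (hα1 : α < 1) (z : ℝ)
    (hz : cdf (gaussianReal 0 1) z = 1 - α / 2) :
    ENNReal.ofReal (1 - α) ≤ gaussianReal 0 1 (Set.Icc (-z) z) := by
  set N := gaussianReal 0 1 with hN
  have hsingleton : ∀ x : ℝ, N {x} = 0 := fun x =>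
    (gaussianReal_absolutelyContinuous 0 one_ne_zero) (Real.volume_singleton)
  have hIicz : N (Set.Iic z) = ENNReal.ofReal (1 - α / 2) := by
    rw [← ofReal_cdf N z, hz]
  have hIoiz : N (Set.Ioi z) = ENNReal.ofReal (α / 2) := by
    have hcompl : N (Set.Iic z)ᶜ = 1 - N (Set.Iic z) :=
      prob_compl_eq_one_sub measurableSet_Iic
    rw [Set.compl_Iic] at hcompl
    rw [hcompl, hIicz, show (1:ℝ≥0∞) = ENNReal.ofReal 1 from ENNReal.ofReal_one.symm,
      ← ENNReal.ofReal_sub 1 (by linarith : (0:ℝ) ≤ 1 - α / 2)]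
    norm_num
  have hIicneg : N (Set.Iic (-z)) = N (Set.Ici z) := by
    conv_lhs => rw [hN, ← gauss_map_neg]
    rw [Measure.map_apply measurable_neg measurableSet_Iic]
    congr 1
    ext x
    simp
  have hIci : N (Set.Ici z) ≤ ENNReal.ofReal (α / 2) := by
    have : Set.Ici z ⊆ Set.Ioi z ∪ {z} := by
      intro x hx
      rcases eq_or_lt_of_le (Set.mem_Ici.mp hx) with h | h
      · exact Or.inr (by simp [h.symm])
      · exact Or.inl h
    calc N (Set.Ici z) ≤ N (Set.Ioi z ∪ {z}) := measure_mono this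
      _ ≤ N (Set.Ioi z) + N {z} := measure_union_le _ _
      _ = ENNReal.ofReal (α / 2) := by rw [hIoiz, hsingleton z, add_zero]
  have hcompl_le : N (Set.Icc (-z) z)ᶜ ≤ ENNReal.ofReal α := by
    have hcc : (Set.Icc (-z) z)ᶜ = Set.Iio (-z) ∪ Set.Ioi z := by
      ext x
      simp only [Set.mem_compl_iff, Set.mem_Icc, not_and_or, not_le, Set.mem_union,
        Set.mem_Iio, Set.mem_Ioi]
    rw [hcc]
    calc N (Set.Iio (-z) ∪ Set.Ioi z) ≤ N (Set.Iio (-z)) + N (Set.Ioi z) :=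
          measure_union_le _ _
      _ ≤ N (Set.Iic (-z)) + N (Set.Ioi z) :=
          add_le_add (measure_mono Set.Iio_subset_Iic_self) le_rfl
      _ ≤ ENNReal.ofReal (α / 2) + ENNReal.ofReal (α / 2) := by
          rw [hIicneg, hIoiz]; exact add_le_add hIci le_rfl
      _ = ENNReal.ofReal α := by
          rw [← ENNReal.ofReal_add (by linarith) (by linarith)]; norm_num
  have hsum : N (Set.Icc (-z) z) + N (Set.Icc (-z) z)ᶜ = 1 := by
    have := measure_add_measure_compl (μ := N) (measurableSet_Icc (a := -z) (b := z))
    rwa [measure_univ] at this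
  have h1le : (1:ℝ≥0∞) ≤ N (Set.Icc (-z) z) + ENNReal.ofReal α := by
    rw [← hsum]; exact add_le_add le_rfl hcompl_le
  have heq : ENNReal.ofReal (1 - α) = 1 - ENNReal.ofReal α := by
    refine ENNReal.eq_sub_of_add_eq ENNReal.ofReal_ne_top ?_
    rw [← ENNReal.ofReal_add (by linarith) (by linarith),
      show 1 - α + α = 1 by ring, ENNReal.ofReal_one]
  rw [heq]
  exact tsub_le_iff_right.mpr h1le


end Stmt13Aux

section Stmt13Main
open Real
open scoped ENNReal NNReal

/-- For independent standard normal `U₁, U₂, U₃`, `λ₁, λ₂ ≥ 0`,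
`B₂₁, B₃₂ ≥ 0`, `α ∈ (0,1)`, `z = Φ⁻¹(1 − α/2)` and
`σ = √((λ₁/2 + λ₂/3)² + (1 − λ₁/2 − (2/3)λ₂)² + (λ₂/3)²)`, the conservative three-point
plausibility region covers `U₂` with probability at least `1 − α`. -/
theorem stmt13 {Ω : Type*} [MeasurableSpace Ω] (P : Measure Ω) [IsProbabilityMeasure P]
    (U₁ U₂ U₃ : Ω → ℝ) (hm₁ : Measurable U₁) (hm₂ : Measurable U₂) (hm₃ : Measurable U₃)
    (hind : iIndepFun ![U₁, U₂, U₃] P)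
    (h₁ : Measure.map U₁ P = gaussianReal 0 1) (h₂ : Measure.map U₂ P = gaussianReal 0 1)
    (h₃ : Measure.map U₃ P = gaussianReal 0 1)
    (lam₁ lam₂ : ℝ) (hlam₁ : 0 ≤ lam₁) (hlam₂ : 0 ≤ lam₂)
    (B₂₁ B₃₂ : ℝ) (hB₂₁ : 0 ≤ B₂₁) (hB₃₂ : 0 ≤ B₃₂)
    (α : ℝ) (hα : α ∈ Set.Ioo (0 : ℝ) 1)
    (z : ℝ) (hz : cdf (gaussianReal 0 1) z = 1 - α / 2) :
    ENNReal.ofReal (1 - α) ≤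
      P {ω | ∃ v₂₁ ∈ Set.Icc (U₂ ω - U₁ ω - B₂₁) (U₂ ω - U₁ ω + B₂₁),
          ∃ v₃₂ ∈ Set.Icc (U₃ ω - U₂ ω - B₃₂) (U₃ ω - U₂ ω + B₃₂),
          |U₂ ω - (lam₁ / 2 + lam₂ / 3) * v₂₁ + lam₂ / 3 * v₃₂| ≤
            z * Real.sqrt
              ((lam₁ / 2 + lam₂ / 3) ^ 2 + (1 - lam₁ / 2 - 2 / 3 * lam₂) ^ 2 +
                (lam₂ / 3) ^ 2)} := by
  obtain ⟨hα0, hα1⟩ := hα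
  set a : ℝ := lam₁ / 2 + lam₂ / 3 with ha
  set b : ℝ := 1 - lam₁ / 2 - 2 / 3 * lam₂ with hb
  set c : ℝ := lam₂ / 3 with hc
  set S : ℝ := a ^ 2 + b ^ 2 + c ^ 2 with hS
  have hSpos : 0 < S := by
    rcases eq_or_ne a 0 with h0 | h0
    · have h1 : lam₁ = 0 := by rw [ha] at h0; linarith
      have h2 : lam₂ = 0 := by rw [ha] at h0; linarith
      have hb1 : b = 1 := by rw [hb, h1, h2]; ring
      rw [hS, hb1]
      nlinarith [sq_nonneg a, sq_nonneg c]
    · have : 0 < a ^ 2 := by positivity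
      rw [hS]
      nlinarith [sq_nonneg b, sq_nonneg c]
  set σ : ℝ := Real.sqrt S with hσdef
  have hσ : 0 < σ := Real.sqrt_pos.mpr hSpos
  have hσ2 : σ ^ 2 = S := Real.sq_sqrt hSpos.le
  -- the independent scaled variables
  set g : Fin 3 → ℝ → ℝ := ![fun x => a * x, fun x => b * x, fun x => c * x] with hg
  have hgm : ∀ i, Measurable (g i) := by
    intro i
    fin_cases i <;> simp only [hg, Matrix.cons_val_zero, Matrix.cons_val_one, Matrix.head_cons,
      Matrix.cons_val_two, Matrix.tail_cons] <;> exact measurable_id.const_mul _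
  set f : Fin 3 → Ω → ℝ := fun i => g i ∘ ![U₁, U₂, U₃] i with hf
  have hindf : iIndepFun f P :=
    hind.comp g hgm
  have hfm : ∀ i, Measurable (f i) := by
    intro i
    fin_cases i
    · exact (hgm 0).comp hm₁
    · exact (hgm 1).comp hm₂
    · exact (hgm 2).comp hm₃
  -- marginal distributions
  have hmap : ∀ (r : ℝ) (U : Ω → ℝ), Measurable U → Measure.map U P = gaussianReal 0 1 →
      Measure.map (fun ω => r * U ω) P = gaussianReal 0 ⟨r ^ 2, sq_nonneg r⟩ := by
    intro r U hU hUd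
    have : Measure.map (fun ω => r * U ω) P = Measure.map (r * ·) (Measure.map U P) := by
      rw [Measure.map_map (measurable_const_mul r) hU]; rfl
    rw [this, hUd, gaussianReal_map_const_mul, mul_zero, mul_one]
    rfl
  have hmap0 : Measure.map (f 0) P = gaussianReal 0 ⟨a ^ 2, sq_nonneg a⟩ :=
    hmap a U₁ hm₁ h₁
  have hmap1 : Measure.map (f 1) P = gaussianReal 0 ⟨b ^ 2, sq_nonneg b⟩ :=
    hmap b U₂ hm₂ h₂
  have hmap2 : Measure.map (f 2) P = gaussianReal 0 ⟨c ^ 2, sq_nonneg c⟩ :=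
    hmap c U₃ hm₃ h₃
  -- sum distribution
  have h01 : IndepFun (f 0) (f 1) P := hindf.indepFun (show (0 : Fin 3) ≠ 1 by decide)
  have hadd1 : Measure.map (fun ω => f 0 ω + f 1 ω) P
      = gaussianReal 0 (⟨a ^ 2, sq_nonneg a⟩ + ⟨b ^ 2, sq_nonneg b⟩) :=
    map_add_gauss (hfm 0) (hfm 1) h01 hmap0 hmap1
  have h012 : IndepFun (f 0 + f 1) (f 2) P :=
    hindf.indepFun_add_left hfm 0 1 2 (by decide) (by decide)
  have haddW : Measure.map (fun ω => (f 0 ω + f 1 ω) + f 2 ω) P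
      = gaussianReal 0 ((⟨a ^ 2, sq_nonneg a⟩ + ⟨b ^ 2, sq_nonneg b⟩) + ⟨c ^ 2, sq_nonneg c⟩) :=
    map_add_gauss ((hfm 0).add (hfm 1)) (hfm 2) h012 hadd1 hmap2
  have hVeq : ((⟨a ^ 2, sq_nonneg a⟩ + ⟨b ^ 2, sq_nonneg b⟩) + ⟨c ^ 2, sq_nonneg c⟩ : ℝ≥0)
      = ⟨S, hSpos.le⟩ := by
    apply NNReal.eq
    push_cast
    exact hS.symm
  rw [hVeq] at haddW
  set W : Ω → ℝ := fun ω => (f 0 ω + f 1 ω) + f 2 ω with hW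
  have hWval : ∀ ω, W ω = a * U₁ ω + b * U₂ ω + c * U₃ ω := fun ω => rfl
  have hWmeas : Measurable W := ((hfm 0).add (hfm 1)).add (hfm 2)
  -- event inclusion
  have hsub : {ω | |W ω| ≤ z * σ} ⊆
      {ω | ∃ v₂₁ ∈ Set.Icc (U₂ ω - U₁ ω - B₂₁) (U₂ ω - U₁ ω + B₂₁),
          ∃ v₃₂ ∈ Set.Icc (U₃ ω - U₂ ω - B₃₂) (U₃ ω - U₂ ω + B₃₂),
          |U₂ ω - a * v₂₁ + c * v₃₂| ≤ z * σ} := by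
    intro ω hω
    refine ⟨U₂ ω - U₁ ω, ⟨by linarith, by linarith⟩,
      U₃ ω - U₂ ω, ⟨by linarith, by linarith⟩, ?_⟩
    have hexpr : U₂ ω - a * (U₂ ω - U₁ ω) + c * (U₃ ω - U₂ ω) = W ω := by
      rw [hWval ω, ha, hb, hc]; ring
    rw [hexpr]
    exact hω
  refine le_trans ?_ (measure_mono hsub)
  have hset : {ω | |W ω| ≤ z * σ} = W ⁻¹' (Set.Icc (-(z * σ)) (z * σ)) := by
    ext ω
    simp [abs_le, Set.mem_Icc, neg_le]
  rw [hset, ← Measure.map_apply hWmeas measurableSet_Icc, haddW]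
  -- standardize
  have hmapσ : (gaussianReal 0 1).map (σ * ·) = gaussianReal 0 ⟨S, hSpos.le⟩ := by
    rw [gaussianReal_map_const_mul, mul_zero, mul_one]
    congr 1
    apply NNReal.eq
    exact hσ2
  rw [← hmapσ, Measure.map_apply (measurable_const_mul σ) measurableSet_Icc]
  have hpre : (σ * ·) ⁻¹' (Set.Icc (-(z * σ)) (z * σ)) = Set.Icc (-z) z := by
    ext x
    simp only [Set.mem_preimage, Set.mem_Icc]
    rw [show σ * x = x * σ by ring, show -(z * σ) = (-z) * σ by ring,
      mul_le_mul_iff_of_pos_right hσ, mul_le_mul_iff_of_pos_right hσ]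
  rw [hpre]
  exact gauss_Icc_ge hα0 hα1 z hz

end Stmt13Main
end

section
/- Let n ≥ 2, let U₀, U₁, …, U_{n−1} be independent standard normal random variables, λ₁, …, λ_{n−1} ∈ ℝ, α ∈ (0,1), z = Φ⁻¹(1 − α/2), and Δ = √( (1 − Σ_{k=1}^{n−1} λ_k·k/(k+1))² + Σ_{j=1}^{n−1} ( Σ_{k=j}^{n−1} λ_k/(k+1) )² ). Then P( |U₀ − Σ_{k=1}^{n−1} (λ_k/(k+1)) · Σ_{j=1}^{k} (U₀ − U_j)| ≤ z·Δ ) = 1 − α. (This is the marginal validity of the n-point partial-conditioning predictive random set, noting that Σ_{j=1}^k (U₀ − U_j) = k·U₀ − Σ_{j=1}^k U_j.) -/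
open MeasureTheory ProbabilityTheory

open Real Complex
open scoped NNReal ENNReal

lemma integral_rexp_quadratic {b : ℝ} (hb : 0 < b) (c d : ℝ) :
    ∫ x : ℝ, Real.exp (-b * x ^ 2 + c * x + d)
      = Real.sqrt (π / b) * Real.exp (d + c ^ 2 / (4 * b)) := by
  have h := integral_cexp_quadratic (b := (-b : ℂ)) (by simpa using hb) (c : ℂ) (d : ℂ)
  have key : ∀ x : ℝ, Complex.exp ((-b : ℂ) * (x:ℂ) ^ 2 + (c:ℂ) * x + d)
      = ((Real.exp (-b * x ^ 2 + c * x + d) : ℝ) : ℂ) := by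
    intro x
    rw [show ((-b : ℂ) * (x:ℂ) ^ 2 + (c:ℂ) * x + d) = ((-b * x ^ 2 + c * x + d : ℝ) : ℂ) by
      push_cast; ring, Complex.ofReal_exp]
  simp_rw [key] at h
  have h2 : (∫ x : ℝ, ((Real.exp (-b*x^2+c*x+d) : ℝ) : ℂ))
      = ((∫ x : ℝ, Real.exp (-b*x^2+c*x+d) : ℝ) : ℂ) := integral_ofReal
  rw [h2] at h
  have hr : ((π : ℂ) / -(-b : ℂ)) ^ (1 / 2 : ℂ) * Complex.exp ((d : ℂ) - (c:ℂ)^2 / (4 * (-b:ℂ)))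
      = ((Real.sqrt (π / b) * Real.exp (d + c ^ 2 / (4 * b)) : ℝ) : ℂ) := by
    rw [neg_neg]
    have h1 : ((π : ℂ) / (b : ℂ)) = ((π / b : ℝ) : ℂ) := by push_cast; ring
    have h2 : ((1:ℂ)/2) = (((1:ℝ)/2 : ℝ) : ℂ) := by norm_num
    have h3 : ((d : ℂ) - (c:ℂ)^2 / (4 * (-b:ℂ))) = ((d + c ^ 2 / (4 * b) : ℝ) : ℂ) := by
      push_cast
      field_simp
      ring
    rw [h1, h2, ← Complex.ofReal_cpow (by positivity), h3, ← Complex.ofReal_exp,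
      ← Complex.ofReal_mul, ← Real.rpow_natCast]
    norm_num
    rw [← Real.sqrt_eq_rpow]
  rw [hr] at h
  exact_mod_cast h

lemma gaussianPDFReal_conv {v₁ v₂ : ℝ≥0} (h1 : v₁ ≠ 0) (h2 : v₂ ≠ 0) (y : ℝ) :
    (∫ x : ℝ, gaussianPDFReal 0 v₁ x * gaussianPDFReal x v₂ y)
      = gaussianPDFReal 0 (v₁ + v₂) y := by
  have ha0 : 0 < (v₁ : ℝ) := by exact_mod_cast pos_iff_ne_zero.mpr h1
  have hb0 : 0 < (v₂ : ℝ) := by exact_mod_cast pos_iff_ne_zero.mpr h2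
  have ha' : (v₁ : ℝ) ≠ 0 := ha0.ne'
  have hb' : (v₂ : ℝ) ≠ 0 := hb0.ne'
  have hpi := Real.pi_pos
  have hB0 : 0 < 1/(2*(v₁:ℝ)) + 1/(2*(v₂:ℝ)) := by positivity
  have hpt : ∀ x : ℝ, gaussianPDFReal 0 v₁ x * gaussianPDFReal x v₂ y
      = (Real.sqrt (2*π*(v₁:ℝ)))⁻¹ * (Real.sqrt (2*π*(v₂:ℝ)))⁻¹ *
        Real.exp (-(1/(2*(v₁:ℝ)) + 1/(2*(v₂:ℝ)))*x^2 + (y/(v₂:ℝ))*x + (-(y^2)/(2*(v₂:ℝ)))) := by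
    intro x
    simp only [gaussianPDFReal]
    rw [mul_mul_mul_comm, ← Real.exp_add]
    congr 1
    field_simp
    ring
  simp_rw [hpt]
  rw [MeasureTheory.integral_const_mul, integral_rexp_quadratic hB0]
  have hexp : (-(y^2)/(2*(v₂:ℝ)) + (y/(v₂:ℝ))^2 / (4 * (1/(2*(v₁:ℝ)) + 1/(2*(v₂:ℝ)))))
      = -(y - 0)^2/(2*((v₁:ℝ)+(v₂:ℝ))) := by
    field_simp
    ring
  rw [hexp]
  simp only [gaussianPDFReal]
  rw [← mul_assoc]
  congr 1
  rw [← Real.sqrt_inv, ← Real.sqrt_inv, ← Real.sqrt_inv, ← Real.sqrt_mul (by positivity),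
    ← Real.sqrt_mul (by positivity)]
  congr 1
  push_cast
  field_simp
  ring

lemma measurable_gaussianPDFReal_fst (v : ℝ≥0) (y : ℝ) :
    Measurable (fun x : ℝ => gaussianPDFReal x v y) := by
  unfold gaussianPDFReal
  exact (((measurable_const.sub measurable_id).pow_const 2).neg.div_const _).exp.const_mul _


lemma integrable_gaussianPDFReal_mul (v₁ v₂ : ℝ≥0) (y : ℝ) :
    Integrable (fun x : ℝ => gaussianPDFReal 0 v₁ x * gaussianPDFReal x v₂ y) := by
  refine Integrable.mono' ((integrable_gaussianPDFReal 0 v₁).mul_const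
    ((Real.sqrt (2*π*(v₂:ℝ)))⁻¹)) ?_ ?_
  · exact ((measurable_gaussianPDFReal 0 v₁).mul
      (measurable_gaussianPDFReal_fst v₂ y)).aestronglyMeasurable
  · filter_upwards with x
    rw [Real.norm_eq_abs, abs_mul, _root_.abs_of_nonneg (gaussianPDFReal_nonneg 0 v₁ x),
      _root_.abs_of_nonneg (gaussianPDFReal_nonneg x v₂ y)]
    refine mul_le_mul_of_nonneg_left ?_ (gaussianPDFReal_nonneg 0 v₁ x)
    unfold gaussianPDFReal
    nth_rewrite 2 [← mul_one ((Real.sqrt (2*π*(v₂:ℝ)))⁻¹)]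
    refine mul_le_mul_of_nonneg_left ?_ (by positivity)
    rw [Real.exp_le_one_iff]
    have h : (0:ℝ) ≤ (y - x)^2 := sq_nonneg _
    have h2 : (0:ℝ) ≤ 2 * (v₂:ℝ) := by positivity
    rw [neg_div]
    simp only [Left.neg_nonpos_iff]
    positivity


lemma map_add_gaussianReal (v₁ v₂ : ℝ≥0) :
    Measure.map (fun p : ℝ × ℝ => p.1 + p.2) ((gaussianReal 0 v₁).prod (gaussianReal 0 v₂))
      = gaussianReal 0 (v₁ + v₂) := by
  by_cases h1 : v₁ = 0
  · subst h1
    rw [gaussianReal_zero_var, Measure.dirac_prod,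
      Measure.map_map measurable_add measurable_prodMk_left]
    have h : ((fun p : ℝ × ℝ => p.1 + p.2) ∘ Prod.mk (0:ℝ)) = fun y : ℝ => y := by
      ext y; simp
    rw [h, Measure.map_id', zero_add]
  · by_cases h2 : v₂ = 0
    · subst h2
      rw [gaussianReal_zero_var, Measure.prod_dirac,
        Measure.map_map measurable_add measurable_prodMk_right]
      have h : ((fun p : ℝ × ℝ => p.1 + p.2) ∘ (fun x : ℝ => (x, (0:ℝ)))) = fun y : ℝ => y := by
        ext y; simp
      rw [h, Measure.map_id', add_zero]
    · -- nondegenerate case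
      have hmeasF : Measurable (fun q : ℝ × ℝ => gaussianPDF q.1 v₂ q.2) := by
        apply Measurable.ennreal_ofReal
        exact (((measurable_snd.sub measurable_fst).pow_const 2).neg.div_const _).exp.const_mul _
      ext s hs
      rw [Measure.map_apply measurable_add hs,
        Measure.prod_apply (measurable_add hs)]
      have hfib : ∀ x : ℝ, (gaussianReal 0 v₂) (Prod.mk x ⁻¹' ((fun p : ℝ × ℝ => p.1 + p.2) ⁻¹' s))
          = ∫⁻ y : ℝ in s, gaussianPDF x v₂ y := by
        intro x
        have h : (Prod.mk x ⁻¹' ((fun p : ℝ × ℝ => p.1 + p.2) ⁻¹' s)) = (fun y => x + y) ⁻¹' s := rfl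
        rw [h, ← Measure.map_apply (measurable_const_add x) hs,
          gaussianReal_map_const_add x, zero_add, gaussianReal_apply x h2 s]
      simp_rw [hfib]
      have hmeasH : Measurable (fun x : ℝ => ∫⁻ y : ℝ in s, gaussianPDF x v₂ y) := by
        apply Measurable.lintegral_prod_right (f := fun x (y : ℝ) => gaussianPDF x v₂ y)
        exact hmeasF
      rw [gaussianReal_of_var_ne_zero 0 h1,
        lintegral_withDensity_eq_lintegral_mul _ (measurable_gaussianPDF 0 v₁) hmeasH]
      have key : ∀ x : ℝ, (gaussianPDF 0 v₁ * fun x => ∫⁻ y : ℝ in s, gaussianPDF x v₂ y) x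
          = ∫⁻ y : ℝ in s, gaussianPDF 0 v₁ x * gaussianPDF x v₂ y := by
        intro x
        simp only [Pi.mul_apply]
        have hx : Measurable (fun y : ℝ => gaussianPDF x v₂ y) := measurable_gaussianPDF x v₂
        exact (lintegral_const_mul _ hx).symm
      rw [lintegral_congr key, lintegral_lintegral_swap
        (((measurable_gaussianPDF 0 v₁).comp measurable_fst).mul hmeasF).aemeasurable]
      rw [gaussianReal_apply 0 (by simp [h1] : v₁ + v₂ ≠ 0) s]
      refine setLIntegral_congr_fun hs (fun y _ => ?_)
      unfold gaussianPDF
      calc ∫⁻ x : ℝ, ENNReal.ofReal (gaussianPDFReal 0 v₁ x) * ENNReal.ofReal (gaussianPDFReal x v₂ y)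
          = ∫⁻ x : ℝ, ENNReal.ofReal (gaussianPDFReal 0 v₁ x * gaussianPDFReal x v₂ y) := by
            refine lintegral_congr fun x => ?_
            rw [ENNReal.ofReal_mul (gaussianPDFReal_nonneg 0 v₁ x)]
        _ = ENNReal.ofReal (∫ x : ℝ, gaussianPDFReal 0 v₁ x * gaussianPDFReal x v₂ y) := by
            rw [← ofReal_integral_eq_lintegral_ofReal (integrable_gaussianPDFReal_mul v₁ v₂ y)
              (ae_of_all _ fun x => mul_nonneg (gaussianPDFReal_nonneg 0 v₁ x)
                (gaussianPDFReal_nonneg x v₂ y))]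
        _ = ENNReal.ofReal (gaussianPDFReal 0 (v₁ + v₂) y) := by
            rw [gaussianPDFReal_conv h1 h2 y]

lemma indepFun_map_add {Ω : Type*} [MeasurableSpace Ω] (P : Measure Ω) [IsProbabilityMeasure P]
    {X Y : Ω → ℝ} (hX : Measurable X) (hY : Measurable Y) (h : IndepFun X Y P)
    {v₁ v₂ : ℝ≥0} (hlX : P.map X = gaussianReal 0 v₁) (hlY : P.map Y = gaussianReal 0 v₂) :
    P.map (fun ω => X ω + Y ω) = gaussianReal 0 (v₁ + v₂) := by
  have hprod := (indepFun_iff_map_prod_eq_prod_map_map hX.aemeasurable hY.aemeasurable).1 h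
  have heq : (fun ω => X ω + Y ω) = (fun p : ℝ × ℝ => p.1 + p.2) ∘ (fun ω => (X ω, Y ω)) := rfl
  rw [heq, ← Measure.map_map measurable_add (hX.prodMk hY), hprod, hlX, hlY,
    map_add_gaussianReal]


lemma map_sum_gaussianReal {Ω : Type*} [MeasurableSpace Ω] (P : Measure Ω)
    [IsProbabilityMeasure P] {ι : Type*} (X : ι → Ω → ℝ) (hX : ∀ i, Measurable (X i))
    (hind : iIndepFun X P)
    (v : ι → ℝ≥0) (s : Finset ι) (hlaw : ∀ i ∈ s, P.map (X i) = gaussianReal 0 (v i)) :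
    P.map (fun ω => ∑ i ∈ s, X i ω) = gaussianReal 0 (∑ i ∈ s, v i) := by
  classical
  induction s using Finset.induction with
  | empty =>
      simp only [Finset.sum_empty]
      rw [Measure.map_const, measure_univ, one_smul, gaussianReal_zero_var]
  | @insert i s hi ih =>
      have hY : Measurable (fun ω => ∑ j ∈ s, X j ω) := by
        apply Finset.measurable_sum
        exact fun j _ => hX j
      have hindep : IndepFun (X i) (fun ω => ∑ j ∈ s, X j ω) P := by
        have h := (hind.indepFun_finsetSum_of_notMem hX hi).symm
        have hfe : (∑ j ∈ s, X j) = (fun ω => ∑ j ∈ s, X j ω) := by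
          ext ω; simp [Finset.sum_apply]
        rwa [hfe] at h
      have heq : (fun ω => ∑ j ∈ insert i s, X j ω)
          = fun ω => X i ω + ∑ j ∈ s, X j ω := by
        ext ω; rw [Finset.sum_insert hi]
      rw [heq, Finset.sum_insert hi]
      exact indepFun_map_add P (hX i) hY hindep (hlaw i (Finset.mem_insert_self i s))
        (ih fun j hj => hlaw j (Finset.mem_insert_of_mem hj))

lemma gaussianReal_map_neg : (gaussianReal 0 1).map (fun y : ℝ => -y) = gaussianReal 0 1 := by
  have h := gaussianReal_map_const_mul (μ := 0) (v := 1) (-1)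
  have he : (fun y : ℝ => -1 * y) = (fun y : ℝ => -y) := by ext y; ring
  have hv : (⟨(-1:ℝ)^2, sq_nonneg _⟩ : ℝ≥0) * 1 = 1 := by
    ext; norm_num
  rw [show ((-1 : ℝ) * ·) = (fun y : ℝ => -y) from he] at h
  rw [h, mul_zero]
  congr 1


lemma gaussianReal_singleton (x : ℝ) : gaussianReal 0 1 {x} = 0 :=
  (gaussianReal_absolutelyContinuous 0 one_ne_zero) (Real.volume_singleton)


lemma gaussianReal_Iio_eq_Iic (x : ℝ) :
    gaussianReal 0 1 (Set.Iio x) = gaussianReal 0 1 (Set.Iic x) := by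
  refine le_antisymm (measure_mono Set.Iio_subset_Iic_self) ?_
  rw [← Set.Iio_union_right]
  refine le_trans (measure_union_le _ _) ?_
  simp [gaussianReal_singleton]


lemma gaussianReal_Iic_neg (x : ℝ) :
    gaussianReal 0 1 (Set.Iic (-x)) = gaussianReal 0 1 (Set.Ici x) := by
  conv_lhs => rw [← _root_.gaussianReal_map_neg]
  rw [Measure.map_apply measurable_neg measurableSet_Iic]
  congr 1
  ext y
  simp only [Set.mem_preimage, Set.mem_Iic, Set.mem_Ici]
  constructor <;> intro h <;> linarith


lemma gaussianReal_Ici (x : ℝ) :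
    gaussianReal 0 1 (Set.Ici x) = 1 - gaussianReal 0 1 (Set.Iio x) := by
  rw [← Set.compl_Iio, measure_compl measurableSet_Iio (measure_ne_top _ _), measure_univ]


lemma gaussianReal_cdf_zero : cdf (gaussianReal 0 1) 0 = 1/2 := by
  have h0 : gaussianReal 0 1 (Set.Iic (0:ℝ)) = 1 - gaussianReal 0 1 (Set.Iic (0:ℝ)) := by
    have h := gaussianReal_Iic_neg 0
    rw [neg_zero] at h
    exact h.trans (by rw [gaussianReal_Ici, gaussianReal_Iio_eq_Iic])
  have hle : gaussianReal 0 1 (Set.Iic (0:ℝ)) ≤ 1 := prob_le_one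
  have hne : gaussianReal 0 1 (Set.Iic (0:ℝ)) ≠ ⊤ := measure_ne_top _ _
  rw [cdf_eq_real, measureReal_def]
  have h2 : 2 * gaussianReal 0 1 (Set.Iic (0:ℝ)) = 1 := by
    rw [two_mul]
    nth_rewrite 1 [h0]
    rw [tsub_add_cancel_of_le hle]
  have := congrArg ENNReal.toReal h2
  rw [ENNReal.toReal_mul] at this
  simp only [ENNReal.toReal_one] at this
  norm_num at this ⊢
  linarith


lemma gaussianReal_Icc_prob {V : ℝ≥0} (hV : V ≠ 0) {α z : ℝ} (hα : α ∈ Set.Ioo (0:ℝ) 1)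
    (hz : cdf (gaussianReal 0 1) z = 1 - α / 2) :
    gaussianReal 0 V (Set.Icc (-(z * Real.sqrt (V:ℝ))) (z * Real.sqrt (V:ℝ)))
      = ENNReal.ofReal (1 - α) := by
  have hVpos : 0 < (V:ℝ) := by exact_mod_cast pos_iff_ne_zero.mpr hV
  set Δ := Real.sqrt (V:ℝ) with hΔdef
  have hΔ : 0 < Δ := Real.sqrt_pos.2 hVpos
  have hz0 : 0 < z := by
    by_contra h
    push_neg at h
    have hmono := monotone_cdf (μ := gaussianReal 0 1) h
    rw [hz, gaussianReal_cdf_zero] at hmono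
    have := hα.2
    linarith
  have hscale : gaussianReal 0 V = (gaussianReal 0 1).map (fun x => Δ * x) := by
    rw [show (fun x : ℝ => Δ * x) = (Δ * ·) from rfl, gaussianReal_map_const_mul Δ]
    congr 1
    · ring
    · ext
      simp only [NNReal.coe_mul, NNReal.coe_mk, NNReal.coe_one, mul_one]
      rw [hΔdef, Real.sq_sqrt hVpos.le]
  rw [hscale, Measure.map_apply (measurable_const_mul Δ) measurableSet_Icc]
  have hpre : (fun x => Δ * x) ⁻¹' (Set.Icc (-(z*Δ)) (z*Δ)) = Set.Icc (-z) z := by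
    ext x
    simp only [Set.mem_preimage, Set.mem_Icc]
    constructor
    · rintro ⟨h1, h2⟩
      constructor <;> nlinarith
    · rintro ⟨h1, h2⟩
      constructor <;> nlinarith
  rw [hpre]
  have hIicz : gaussianReal 0 1 (Set.Iic z) = ENNReal.ofReal (1 - α/2) := by
    rw [← ofReal_cdf, hz]
  have hIicneg : gaussianReal 0 1 (Set.Iic (-z)) = ENNReal.ofReal (α/2) := by
    rw [gaussianReal_Iic_neg, gaussianReal_Ici, gaussianReal_Iio_eq_Iic, hIicz,
      ← ENNReal.ofReal_one, ← ENNReal.ofReal_sub _ (by linarith [hα.2] : (0:ℝ) ≤ 1 - α/2)]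
    congr 1
    ring
  have hIcc : Set.Icc (-z) z = Set.Iic z \ Set.Iio (-z) := by
    ext x
    simp only [Set.mem_Icc, Set.mem_diff, Set.mem_Iic, Set.mem_Iio, not_lt]
    constructor
    · rintro ⟨h1, h2⟩; exact ⟨h2, h1⟩
    · rintro ⟨h1, h2⟩; exact ⟨h2, h1⟩
  rw [hIcc, measure_diff (fun x hx => by
      simp only [Set.mem_Iio, Set.mem_Iic] at hx ⊢
      linarith) measurableSet_Iio.nullMeasurableSet (measure_ne_top _ _),
    gaussianReal_Iio_eq_Iic, hIicz, hIicneg,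
    ← ENNReal.ofReal_sub _ (by linarith [hα.1] : (0:ℝ) ≤ α/2)]
  congr 1
  ring

/-- For `n ≥ 2`, independent standard normal `U₀, …, U_{n−1}`,
`λ₁, …, λ_{n−1} ∈ ℝ`, `α ∈ (0,1)`, `z = Φ⁻¹(1 − α/2)` and `Δ` the standard deviation of
the partial regression residual,
`P(|U₀ − Σ_{k=1}^{n−1} (λ_k/(k+1)) Σ_{j=1}^{k} (U₀ − U_j)| ≤ z·Δ) = 1 − α`. -/
theorem stmt17 {Ω : Type*} [MeasurableSpace Ω] (P : Measure Ω) [IsProbabilityMeasure P]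
    (n : ℕ) (hn : 2 ≤ n) (U : ℕ → Ω → ℝ) (hm : ∀ i, i < n → Measurable (U i))
    (hind : iIndepFun (fun i : Fin n => U i) P)
    (hlaw : ∀ i, i < n → Measure.map (U i) P = gaussianReal 0 1) (lam : ℕ → ℝ)
    (α : ℝ) (hα : α ∈ Set.Ioo (0 : ℝ) 1)
    (z : ℝ) (hz : cdf (gaussianReal 0 1) z = 1 - α / 2) :
    P {ω | |U 0 ω - ∑ k ∈ Finset.Icc 1 (n - 1),
        lam k / ((k : ℝ) + 1) * ∑ j ∈ Finset.Icc 1 k, (U 0 ω - U j ω)| ≤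
        z * Real.sqrt
          ((1 - ∑ k ∈ Finset.Icc 1 (n - 1), lam k * (k : ℝ) / ((k : ℝ) + 1)) ^ 2 +
            ∑ j ∈ Finset.Icc 1 (n - 1),
              (∑ k ∈ Finset.Icc j (n - 1), lam k / ((k : ℝ) + 1)) ^ 2)} =
      ENNReal.ofReal (1 - α) := by
  classical
  set m := n - 1 with hm1
  set c : ℕ → ℝ := fun j => if j = 0 then 1 - ∑ k ∈ Finset.Icc 1 m, lam k * (k:ℝ)/((k:ℝ)+1)
    else ∑ k ∈ Finset.Icc j m, lam k/((k:ℝ)+1) with hc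
  set X : Fin n → Ω → ℝ := fun i ω => c i * U i ω with hXdef
  set v : Fin n → ℝ≥0 := fun i => ⟨c i ^ 2, sq_nonneg _⟩ with hv
  have hXm : ∀ i : Fin n, Measurable (X i) := fun i => (hm i i.2).const_mul (c i)
  have hXind : iIndepFun X P :=
    hind.comp (fun i => fun x : ℝ => c i * x) (fun i => measurable_const_mul _)
  have hXlaw : ∀ i ∈ Finset.univ, P.map (X i) = gaussianReal 0 (v i) := by
    intro i _
    have heq : X i = (fun x : ℝ => c i * x) ∘ U i := rfl
    rw [heq, ← Measure.map_map (measurable_const_mul _) (hm i i.2), hlaw i i.2,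
      show (fun x : ℝ => c (i:ℕ) * x) = ((c (i:ℕ)) * ·) from rfl,
      gaussianReal_map_const_mul]
    congr 1
    · ring
    · ext
      simp [hv]
      rfl
  have hmap := map_sum_gaussianReal P X hXm hXind v Finset.univ hXlaw
  set V : ℝ≥0 := ∑ i : Fin n, v i with hV
  have hSm : Measurable (fun ω => ∑ i : Fin n, X i ω) :=
    Finset.measurable_sum _ (fun i _ => hXm i)
  have hVc : (V : ℝ) = ∑ j ∈ Finset.range n, c j ^ 2 := by
    rw [hV]
    push_cast
    exact Fin.sum_univ_eq_sum_range (fun j => c j ^ 2) n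
  have hrange : Finset.range n = insert 0 (Finset.Icc 1 m) := by
    ext j
    simp only [Finset.mem_range, Finset.mem_insert, Finset.mem_Icc, hm1]
    omega
  have h0notin : (0:ℕ) ∉ Finset.Icc 1 m := by simp
  have hcard : ∀ k : ℕ, (Finset.Icc 1 k).card = k := by
    intro k; rw [Nat.card_Icc]; omega
  have hc0 : c 0 = 1 - ∑ k ∈ Finset.Icc 1 m, lam k * (k:ℝ)/((k:ℝ)+1) := by
    simp only [hc]
    norm_num
  have hcval : ∀ j, 1 ≤ j → c j = ∑ k ∈ Finset.Icc j m, lam k/((k:ℝ)+1) := by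
    intro j hj
    simp only [hc]
    rw [if_neg (by omega)]
  have hs2 : ∑ j ∈ Finset.Icc 1 m, c j ^ 2
      = ∑ j ∈ Finset.Icc 1 m, (∑ k ∈ Finset.Icc j m, lam k / ((k:ℝ)+1)) ^ 2 :=
    Finset.sum_congr rfl (fun j hj => by rw [hcval j (Finset.mem_Icc.1 hj).1])
  have hA : ((1 - ∑ k ∈ Finset.Icc 1 m, lam k * (k : ℝ) / ((k : ℝ) + 1)) ^ 2 +
      ∑ j ∈ Finset.Icc 1 m, (∑ k ∈ Finset.Icc j m, lam k / ((k : ℝ) + 1)) ^ 2) = (V:ℝ) := by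
    rw [hVc, hrange, Finset.sum_insert h0notin, hc0, hs2]
  have hsum1 : ∑ j ∈ Finset.range n, c j = 1 := by
    rw [hrange, Finset.sum_insert h0notin]
    have h1 : ∑ j ∈ Finset.Icc 1 m, c j
        = ∑ k ∈ Finset.Icc 1 m, (k:ℝ) * (lam k/((k:ℝ)+1)) := by
      rw [Finset.sum_congr rfl (fun j hj => hcval j (Finset.mem_Icc.1 hj).1)]
      rw [← Finset.sum_comm' (s := Finset.Icc 1 m) (t := fun k => Finset.Icc 1 k)
        (t' := Finset.Icc 1 m) (s' := fun j => Finset.Icc j m)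
        (f := fun k _ => lam k / ((k:ℝ)+1))
        (fun k j => by simp only [Finset.mem_Icc]; omega)]
      refine Finset.sum_congr rfl fun k _ => ?_
      rw [Finset.sum_const, hcard k, nsmul_eq_mul]
    rw [h1, hc0]
    have h2 : ∑ k ∈ Finset.Icc 1 m, lam k * (k:ℝ)/((k:ℝ)+1)
        = ∑ k ∈ Finset.Icc 1 m, (k:ℝ) * (lam k/((k:ℝ)+1)) :=
      Finset.sum_congr rfl fun k _ => by ring
    rw [h2]
    ring
  have hV0 : V ≠ 0 := by
    intro h
    have hzero : (V:ℝ) = 0 := by rw [h]; simp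
    rw [hVc] at hzero
    have hall : ∀ j ∈ Finset.range n, c j = 0 := by
      intro j hj
      have h3 := (Finset.sum_eq_zero_iff_of_nonneg (fun j _ => sq_nonneg (c j))).1 hzero j hj
      exact pow_eq_zero_iff (two_ne_zero) |>.1 h3
    have : (1:ℝ) = 0 := by rw [← hsum1]; exact Finset.sum_eq_zero hall
    norm_num at this
  have hpt : ∀ ω, U 0 ω - ∑ k ∈ Finset.Icc 1 m,
      lam k / ((k : ℝ) + 1) * ∑ j ∈ Finset.Icc 1 k, (U 0 ω - U j ω)
      = ∑ i : Fin n, X i ω := by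
    intro ω
    have hsum : ∑ i : Fin n, X i ω = ∑ j ∈ Finset.range n, c j * U j ω :=
      Fin.sum_univ_eq_sum_range (fun j => c j * U j ω) n
    rw [hsum, hrange, Finset.sum_insert h0notin]
    have hinner : ∀ k, ∑ j ∈ Finset.Icc 1 k, (U 0 ω - U j ω)
        = (k:ℝ) * U 0 ω - ∑ j ∈ Finset.Icc 1 k, U j ω := by
      intro k
      rw [Finset.sum_sub_distrib, Finset.sum_const, hcard k, nsmul_eq_mul]
    simp_rw [hinner, mul_sub]
    rw [Finset.sum_sub_distrib]
    have hswap : ∑ k ∈ Finset.Icc 1 m, (lam k / ((k:ℝ)+1)) * ∑ j ∈ Finset.Icc 1 k, U j ω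
        = ∑ j ∈ Finset.Icc 1 m, (∑ k ∈ Finset.Icc j m, lam k / ((k:ℝ)+1)) * U j ω := by
      simp_rw [Finset.mul_sum]
      rw [Finset.sum_comm' (s := Finset.Icc 1 m) (t := fun k => Finset.Icc 1 k)
        (t' := Finset.Icc 1 m) (s' := fun j => Finset.Icc j m)
        (f := fun k j => lam k / ((k:ℝ)+1) * U j ω)
        (fun k j => by simp only [Finset.mem_Icc]; omega)]
      simp_rw [Finset.sum_mul]
    rw [hswap]
    have hcj : ∑ j ∈ Finset.Icc 1 m, c j * U j ω
        = ∑ j ∈ Finset.Icc 1 m, (∑ k ∈ Finset.Icc j m, lam k / ((k:ℝ)+1)) * U j ω := by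
      exact Finset.sum_congr rfl fun j hj => by rw [hcval j (Finset.mem_Icc.1 hj).1]
    rw [hcj, hc0]
    have hterm : ∑ k ∈ Finset.Icc 1 m, lam k / ((k:ℝ)+1) * ((k:ℝ) * U 0 ω)
        = (∑ k ∈ Finset.Icc 1 m, lam k * (k:ℝ)/((k:ℝ)+1)) * U 0 ω := by
      rw [Finset.sum_mul]
      refine Finset.sum_congr rfl fun k _ => ?_
      ring
    rw [hterm]
    ring
  have hset : {ω | |U 0 ω - ∑ k ∈ Finset.Icc 1 m,
        lam k / ((k : ℝ) + 1) * ∑ j ∈ Finset.Icc 1 k, (U 0 ω - U j ω)| ≤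
        z * Real.sqrt
          ((1 - ∑ k ∈ Finset.Icc 1 m, lam k * (k : ℝ) / ((k : ℝ) + 1)) ^ 2 +
            ∑ j ∈ Finset.Icc 1 m,
              (∑ k ∈ Finset.Icc j m, lam k / ((k : ℝ) + 1)) ^ 2)}
      = (fun ω => ∑ i : Fin n, X i ω) ⁻¹'
          Set.Icc (-(z * Real.sqrt (V:ℝ))) (z * Real.sqrt (V:ℝ)) := by
    ext ω
    simp only [Set.mem_setOf_eq, Set.mem_preimage, Set.mem_Icc]
    rw [hpt ω, hA, ← abs_le]
  rw [hset, ← Measure.map_apply hSm measurableSet_Icc, hmap]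
  exact gaussianReal_Icc_prob hV0 hα hz
end
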